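/- (Pure peer-to-peer, graph level.) Let P1 and P2 be disjoint sets of vertices with c1 ∈ P1 and c2 ∈ P2, let S = S(P1, P2, c1, c2) be the binary star graph, and let w ∈ P2 \ {c2}. Let G' = S − (P2 \ {c2, w}) be obtained by deleting all vertices of P2 other than c2 and w. Then τ_{c2}(τ_{c1}(G') − c1) − c2 is the complete graph on (P1 \ {c1}) ∪ {w}. -/

import Mathlib

open SimpleGraph

universe u

/-- Local complementation of `G` at vertex `i`: adjacency is toggled exactly among
pairs of neighbors of `i`. -/
def localComp {V : Type u} (G : SimpleGraph V) (i : V) : SimpleGraph V where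
  Adj a b := a ≠ b ∧
    ((G.Adj i a ∧ G.Adj i b) ∧ ¬ G.Adj a b ∨ ¬(G.Adj i a ∧ G.Adj i b) ∧ G.Adj a b)
  symm := by
    constructor
    rintro a b ⟨hne, h⟩
    refine ⟨hne.symm, ?_⟩
    rcases h with ⟨⟨ha, hb⟩, hab⟩ | ⟨h1, h2⟩
    · exact Or.inl ⟨⟨hb, ha⟩, fun h => hab h.symm⟩
    · exact Or.inr ⟨fun h => h1 ⟨h.2, h.1⟩, h2.symm⟩
  loopless := ⟨fun a h => h.1 rfl⟩

/-- Vertex deletion `G − i`: remove every edge incident to `i` (the vertex stays,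
isolated). -/
def delVert {V : Type u} (G : SimpleGraph V) (i : V) : SimpleGraph V where
  Adj a b := G.Adj a b ∧ a ≠ i ∧ b ≠ i
  symm := ⟨fun _ _ ⟨h, ha, hb⟩ => ⟨h.symm, hb, ha⟩⟩
  loopless := ⟨fun a h => h.1.ne rfl⟩

/-- Deletion of a set `Z` of vertices: remove every edge incident to a vertex of `Z`. -/
def delSet {V : Type u} (G : SimpleGraph V) (Z : Set V) : SimpleGraph V where
  Adj a b := G.Adj a b ∧ a ∉ Z ∧ b ∉ Z
  symm := ⟨fun _ _ ⟨h, ha, hb⟩ => ⟨h.symm, hb, ha⟩⟩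
  loopless := ⟨fun a h => h.1.ne rfl⟩

/-- Star graph on the set `W` with center `c`: edges are exactly the pairs `{c, u}`
for `u ∈ W \ {c}`. -/
def starGraph {V : Type u} (W : Set V) (c : V) : SimpleGraph V :=
  SimpleGraph.fromRel (fun a b => a = c ∧ b ∈ W \ {c})

/-- Complete graph on the set `A`: edges are exactly all pairs of distinct elements
of `A`. -/
def completeOn {V : Type u} (A : Set V) : SimpleGraph V :=
  SimpleGraph.fromRel (fun a b => a ∈ A ∧ b ∈ A)

/-- Complete bipartite graph on parts `A` and `B`: edges are exactly the pairs
`{a, b}` with `a ∈ A` and `b ∈ B`. -/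
def completeBipartiteOn {V : Type u} (A B : Set V) : SimpleGraph V :=
  SimpleGraph.fromRel (fun a b => a ∈ A ∧ b ∈ B)

/-- Binary star graph `S(P1, P2, c1, c2)`: edges are exactly the pairs `{c1, u}`
with `u ∈ P2` together with the pairs `{u, c2}` with `u ∈ P1`. -/
def binaryStar {V : Type u} (P1 P2 : Set V) (c1 c2 : V) : SimpleGraph V :=
  SimpleGraph.fromRel (fun a b => (a = c1 ∧ b ∈ P2) ∨ (a ∈ P1 ∧ b = c2))

/-- The graph with the single edge `{c1, c2}`. -/
def singleEdge {V : Type u} (c1 c2 : V) : SimpleGraph V :=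
  SimpleGraph.fromRel (fun a b => a = c1 ∧ b = c2)

/-!
In `G' = S − (P2 \ {c2, w})` the only edges are `c1c2`, `c1w` and `uc2` for `u ∈ P1`, so `G'` is the
binary star with `P2 = {c2, w}`. The neighbours of `c1` are `c2` and `w`, so `τ_{c1}` only adds the
edge `c2w`, and deleting `c1` leaves a star centred at `c2` with leaves `(P1 \ {c1}) ∪ {w}`.
Local complementation at the centre of a star makes its leaves a clique, and deleting the centre
leaves exactly that clique.
-/

section

variable {V : Type u}

@[simp] lemma localComp_adj {G : SimpleGraph V} {i a b : V} :
    (localComp G i).Adj a b ↔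
      a ≠ b ∧ ((G.Adj i a ∧ G.Adj i b) ∧ ¬ G.Adj a b ∨ ¬(G.Adj i a ∧ G.Adj i b) ∧ G.Adj a b) :=
  Iff.rfl

@[simp] lemma delVert_adj {G : SimpleGraph V} {i a b : V} :
    (delVert G i).Adj a b ↔ G.Adj a b ∧ a ≠ i ∧ b ≠ i :=
  Iff.rfl

@[simp] lemma delSet_adj {G : SimpleGraph V} {Z : Set V} {a b : V} :
    (delSet G Z).Adj a b ↔ G.Adj a b ∧ a ∉ Z ∧ b ∉ Z :=
  Iff.rfl

lemma starGraph_adj_center {A : Set V} {c x : V} (hc : c ∉ A) :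
    (_root_.starGraph A c).Adj c x ↔ x ∈ A := by
  simp only [_root_.starGraph, fromRel_adj, Set.mem_sdiff, Set.mem_singleton_iff]
  grind

lemma binaryStar_adj_left_center {P1 P2 : Set V} {c1 c2 x : V} (hc1 : c1 ∉ P2)
    (hc2 : c2 ∈ P2) : (binaryStar P1 P2 c1 c2).Adj c1 x ↔ x ∈ P2 := by
  simp only [binaryStar, fromRel_adj]
  grind

lemma delSet_binaryStar {P1 P2 Z : Set V} {c1 c2 : V} (hP1 : Disjoint P1 Z) (hc1 : c1 ∉ Z)
    (hc2 : c2 ∉ Z) : delSet (binaryStar P1 P2 c1 c2) Z = binaryStar P1 (P2 \ Z) c1 c2 := by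
  have hZ : ∀ x ∈ P1, x ∉ Z := fun x hx => hP1.notMem_of_mem_left hx
  ext a b
  simp only [delSet_adj, binaryStar, fromRel_adj, Set.mem_sdiff]
  grind

lemma delVert_localComp_binaryStar_pair {P1 : Set V} {c1 c2 w : V} (hc1 : c1 ∈ P1)
    (hc2 : c2 ∉ P1) (hw : w ∉ P1) :
    delVert (localComp (binaryStar P1 {c2, w} c1 c2) c1) c1 =
      _root_.starGraph ((P1 \ {c1}) ∪ {w}) c2 := by
  have hc1_notMem : c1 ∉ ({c2, w} : Set V) := by grind
  ext a b
  simp only [delVert_adj, localComp_adj,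
    binaryStar_adj_left_center hc1_notMem (Set.mem_insert c2 {w})]
  simp only [_root_.starGraph, binaryStar, fromRel_adj, Set.mem_sdiff, Set.mem_union,
    Set.mem_insert_iff, Set.mem_singleton_iff]
  grind

lemma delVert_localComp_starGraph {A : Set V} {c : V} (hc : c ∉ A) :
    delVert (localComp (_root_.starGraph A c) c) c = completeOn A := by
  ext a b
  simp only [delVert_adj, localComp_adj, starGraph_adj_center hc]
  simp only [_root_.starGraph, completeOn, fromRel_adj, Set.mem_sdiff, Set.mem_singleton_iff]
  grind

end

/-- Pure peer-to-peer, graph level: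
with `G' = S − (P2 \ {c2, w})`, `τ_{c2}(τ_{c1}(G') − c1) − c2` is the complete graph
on `(P1 \ {c1}) ∪ {w}`. -/
theorem stmt_10 {V : Type u} (P1 P2 : Set V) (hdisj : Disjoint P1 P2)
    (c1 c2 : V) (hc1 : c1 ∈ P1) (hc2 : c2 ∈ P2) (w : V) (hw : w ∈ P2 \ {c2}) :
    delVert (localComp (delVert (localComp
        (delSet (binaryStar P1 P2 c1 c2) (P2 \ {c2, w})) c1) c1) c2) c2 =
      completeOn ((P1 \ {c1}) ∪ {w}) := by
  have hc1P2 : c1 ∉ P2 := hdisj.notMem_of_mem_left hc1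
  have hc2P1 : c2 ∉ P1 := hdisj.notMem_of_mem_right hc2
  have hwP1 : w ∉ P1 := hdisj.notMem_of_mem_right hw.1
  have hpair : P2 \ (P2 \ {c2, w}) = {c2, w} :=
    Set.sdiff_sdiff_cancel_left (Set.insert_subset hc2 (Set.singleton_subset_iff.mpr hw.1))
  have hc2_notMem : c2 ∉ (P1 \ {c1}) ∪ {w} := by
    rintro (h | h)
    exacts [hc2P1 h.1, hw.2 (Set.mem_singleton_iff.mp h).symm]
  rw [delSet_binaryStar (hdisj.mono_right Set.sdiff_subset) (fun h => hc1P2 h.1)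
      (fun h => h.2 (Set.mem_insert c2 {w})), hpair,
    delVert_localComp_binaryStar_pair hc1 hc2P1 hwP1, delVert_localComp_starGraph hc2_notMem]
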